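/- arXiv:2505.09214 — 3 statements merged into one kernel-verified Lean document; each statement's English description precedes it below -/
import Mathlib

section
/- (Proposition 1) Let W^{(1)},…,W^{(L)} and Ŵ^{(1)},…,Ŵ^{(L)} be two sets of weight matrices of the same shapes with ‖Ŵ^{(l)}‖_F ≤ ‖W^{(l)}‖_F for each l, and let the input satisfy ‖φ‖ ≤ 1. Then the output distortion of the full network is bounded by ‖f^{(L)}(φ; W) − f^{(L)}(φ; Ŵ)‖ ≤ Σ_{l=1}^{L} A^{(l)} · ‖W^{(l)} − Ŵ^{(l)}‖_F, where A^{(l)} = ∏_{i=1, i≠l}^{L} ‖W^{(i)}‖_F. -/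
/-!
The error at layer `l + 1` splits as `W (x - x') + (W - Ŵ) x'`, where `x`, `x'` are the inputs of
that layer in the two networks. As `σ` is 1-Lipschitz and fixes `0`, `‖x - x'‖` is at most the
error at layer `l`, and `‖x'‖ ≤ ∏_{i ≤ l} ‖Ŵ^{(i)}‖_F ≤ ∏_{i ≤ l} ‖W^{(i)}‖_F`. Since a matrix acts
with norm at most its Frobenius norm, the errors obey a linear recursion whose unrolling is the
stated sum.
-/

open scoped BigOperators

noncomputable def frobNorm {m n : ℕ} (W : Matrix (Fin m) (Fin n) ℝ) : ℝ :=
  Real.sqrt (∑ i, ∑ j, (W i j) ^ 2)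

noncomputable def mulVecE {m n : ℕ} (W : Matrix (Fin m) (Fin n) ℝ)
    (v : EuclideanSpace ℝ (Fin n)) : EuclideanSpace ℝ (Fin m) :=
  (WithLp.equiv 2 _).symm (W.mulVec ((WithLp.equiv 2 _) v))

noncomputable def actE (σ : ℝ → ℝ) {n : ℕ} (v : EuclideanSpace ℝ (Fin n)) :
    EuclideanSpace ℝ (Fin n) :=
  (WithLp.equiv 2 _).symm (fun i => σ ((WithLp.equiv 2 _) v i))

/-- The `l`-th layer output `f^{(l)}(φ; W)` of a fully-connected network:
`f^{(1)}(φ;W) = W^{(1)} φ` and `f^{(l)}(φ;W) = W^{(l)} σ(f^{(l−1)}(φ;W))` for `l ≥ 2`,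
where the matrix of layer `l` is `W (l-1)` (zero-based indexing of layers). -/
noncomputable def fcnet (σ : ℝ → ℝ) (d : ℕ → ℕ)
    (W : (l : ℕ) → Matrix (Fin (d (l + 1))) (Fin (d l)) ℝ)
    (φ : EuclideanSpace ℝ (Fin (d 0))) : (l : ℕ) → EuclideanSpace ℝ (Fin (d l))
  | 0 => φ
  | 1 => mulVecE (W 0) φ
  | (l + 2) => mulVecE (W (l + 1)) (actE σ (fcnet σ d W φ (l + 1)))

namespace Finset

theorem prod_range_succ_erase_of_lt {M : Type*} [CommMonoid M] (f : ℕ → M) {k n : ℕ}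
    (hk : k < n) :
    ∏ i ∈ (range (n + 1)).erase k, f i = (∏ i ∈ (range n).erase k, f i) * f n := by
  rw [range_add_one, erase_insert_of_ne hk.ne', prod_insert (by simp), mul_comm]

/-- Unrolling the recursion, the contribution `e k * p k` of step `k` is multiplied by `c j` for
every later step `j`, while `p k` supplies the factors `c i` of the earlier ones. -/
theorem le_sum_prod_erase_mul_of_le_mul_add_mul {R : Type*} [CommSemiring R] [PartialOrder R]
    [IsOrderedRing R] {a c e p : ℕ → R} (ha : a 0 ≤ 0) (hc : ∀ k, 0 ≤ c k) (he : ∀ k, 0 ≤ e k)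
    (hp : ∀ k, p k ≤ ∏ i ∈ range k, c i) (hstep : ∀ k, a (k + 1) ≤ c k * a k + e k * p k) :
    ∀ n, a n ≤ ∑ k ∈ range n, (∏ i ∈ (range n).erase k, c i) * e k
  | 0 => by simpa using ha
  | n + 1 => by
    have ih := le_sum_prod_erase_mul_of_le_mul_add_mul ha hc he hp hstep n
    calc a (n + 1) ≤ c n * a n + e n * p n := hstep n
      _ ≤ c n * ∑ k ∈ range n, (∏ i ∈ (range n).erase k, c i) * e k
          + e n * ∏ i ∈ range n, c i :=
        add_le_add (mul_le_mul_of_nonneg_left ih (hc n)) (mul_le_mul_of_nonneg_left (hp n) (he n))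
      _ = ∑ k ∈ range (n + 1), (∏ i ∈ (range (n + 1)).erase k, c i) * e k := by
        rw [sum_range_succ, range_add_one, erase_insert (by simp), ← range_add_one,
          mul_sum, mul_comm (e n)]
        congr 1
        refine sum_congr rfl fun k hk => ?_
        rw [prod_range_succ_erase_of_lt c (mem_range.1 hk)]
        ring

end Finset

section Network

variable {m n : ℕ}

lemma frobNorm_nonneg (W : Matrix (Fin m) (Fin n) ℝ) : 0 ≤ frobNorm W :=
  Real.sqrt_nonneg _

lemma mulVecE_apply (W : Matrix (Fin m) (Fin n) ℝ) (v : EuclideanSpace ℝ (Fin n)) (i : Fin m) :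
    mulVecE W v i = ∑ j, W i j * v j :=
  rfl

lemma mulVecE_sub_left (W W' : Matrix (Fin m) (Fin n) ℝ) (v : EuclideanSpace ℝ (Fin n)) :
    mulVecE W v - mulVecE W' v = mulVecE (W - W') v := by
  ext i
  simp [mulVecE, Matrix.sub_mulVec]

lemma mulVecE_sub_right (W : Matrix (Fin m) (Fin n) ℝ) (u v : EuclideanSpace ℝ (Fin n)) :
    mulVecE W u - mulVecE W v = mulVecE W (u - v) := by
  ext i
  simp [mulVecE, Matrix.mulVec_sub]

lemma norm_mulVecE_le (W : Matrix (Fin m) (Fin n) ℝ) (v : EuclideanSpace ℝ (Fin n)) :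
    ‖mulVecE W v‖ ≤ frobNorm W * ‖v‖ := by
  rw [EuclideanSpace.norm_eq, EuclideanSpace.norm_eq, frobNorm, ← Real.sqrt_mul (by positivity),
    Finset.sum_mul]
  refine Real.sqrt_le_sqrt (Finset.sum_le_sum fun i _ => ?_)
  simpa [mulVecE_apply, sq_abs] using Finset.sum_mul_sq_le_sq_mul_sq Finset.univ (W i) v

lemma lipschitzWith_actE {σ : ℝ → ℝ} (hσ : LipschitzWith 1 σ) :
    LipschitzWith 1 (actE σ (n := n)) := by
  refine LipschitzWith.of_dist_le_mul fun u v => ?_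
  rw [NNReal.coe_one, one_mul, EuclideanSpace.dist_eq, EuclideanSpace.dist_eq]
  refine Real.sqrt_le_sqrt (Finset.sum_le_sum fun i _ => ?_)
  have := hσ.dist_le_mul (u i) (v i)
  rw [NNReal.coe_one, one_mul] at this
  exact pow_le_pow_left₀ dist_nonneg this 2

lemma norm_actE_le {σ : ℝ → ℝ} (hσ : LipschitzWith 1 σ) (hσ0 : σ 0 = 0)
    (v : EuclideanSpace ℝ (Fin n)) : ‖actE σ v‖ ≤ ‖v‖ := by
  have h0 : actE σ (0 : EuclideanSpace ℝ (Fin n)) = 0 := by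
    ext i
    simp [actE, hσ0]
  simpa [h0] using (lipschitzWith_actE hσ).norm_sub_le v 0

end Network

section FCNet

variable {σ : ℝ → ℝ} {d : ℕ → ℕ} {W W' : (l : ℕ) → Matrix (Fin (d (l + 1))) (Fin (d l)) ℝ}
  {φ : EuclideanSpace ℝ (Fin (d 0))}

noncomputable def layerInput (σ : ℝ → ℝ) (d : ℕ → ℕ)
    (W : (l : ℕ) → Matrix (Fin (d (l + 1))) (Fin (d l)) ℝ)
    (φ : EuclideanSpace ℝ (Fin (d 0))) : (l : ℕ) → EuclideanSpace ℝ (Fin (d l))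
  | 0 => φ
  | l + 1 => actE σ (fcnet σ d W φ (l + 1))

lemma fcnet_succ (l : ℕ) :
    fcnet σ d W φ (l + 1) = mulVecE (W l) (layerInput σ d W φ l) := by
  cases l <;> rfl

lemma norm_layerInput_le (hσ : LipschitzWith 1 σ) (hσ0 : σ 0 = 0) (l : ℕ) :
    ‖layerInput σ d W φ l‖ ≤ ‖fcnet σ d W φ l‖ := by
  cases l with
  | zero => rfl
  | succ l => exact norm_actE_le hσ hσ0 _

lemma norm_layerInput_sub_le (hσ : LipschitzWith 1 σ) (l : ℕ) :
    ‖layerInput σ d W φ l - layerInput σ d W' φ l‖ ≤ ‖fcnet σ d W φ l - fcnet σ d W' φ l‖ := by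
  cases l with
  | zero => rfl
  | succ l => exact (lipschitzWith_actE hσ).norm_sub_le _ _ |>.trans_eq (one_mul _)

lemma norm_fcnet_le (hσ : LipschitzWith 1 σ) (hσ0 : σ 0 = 0) (hφ : ‖φ‖ ≤ 1) (l : ℕ) :
    ‖fcnet σ d W φ l‖ ≤ ∏ i ∈ Finset.range l, frobNorm (W i) := by
  induction l with
  | zero => simpa [fcnet] using hφ
  | succ l ih =>
    rw [fcnet_succ, Finset.prod_range_succ, mul_comm]
    exact (norm_mulVecE_le _ _).trans <| mul_le_mul_of_nonneg_left
      ((norm_layerInput_le hσ hσ0 l).trans ih) (frobNorm_nonneg _)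

lemma norm_fcnet_sub_succ_le (hσ : LipschitzWith 1 σ) (hσ0 : σ 0 = 0) (l : ℕ) :
    ‖fcnet σ d W φ (l + 1) - fcnet σ d W' φ (l + 1)‖ ≤
      frobNorm (W l) * ‖fcnet σ d W φ l - fcnet σ d W' φ l‖ +
        frobNorm (W l - W' l) * ‖fcnet σ d W' φ l‖ := by
  set x := layerInput σ d W φ l
  set x' := layerInput σ d W' φ l
  have hsplit : mulVecE (W l) x - mulVecE (W' l) x' =
      mulVecE (W l) (x - x') + mulVecE (W l - W' l) x' := by
    rw [← mulVecE_sub_right, ← mulVecE_sub_left]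
    abel
  rw [fcnet_succ, fcnet_succ, hsplit]
  refine (norm_add_le _ _).trans (add_le_add ?_ ?_)
  · exact (norm_mulVecE_le _ _).trans
      (mul_le_mul_of_nonneg_left (norm_layerInput_sub_le hσ l) (frobNorm_nonneg _))
  · exact (norm_mulVecE_le _ _).trans
      (mul_le_mul_of_nonneg_left (norm_layerInput_le hσ hσ0 l) (frobNorm_nonneg _))

end FCNet

theorem fcnet_output_distortion_bound_general (σ : ℝ → ℝ)
    (hσ : LipschitzWith 1 σ) (hσ0 : σ 0 = 0)
    (d : ℕ → ℕ) (L : ℕ)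
    (W W' : (l : ℕ) → Matrix (Fin (d (l + 1))) (Fin (d l)) ℝ)
    (hprune : ∀ l, frobNorm (W' l) ≤ frobNorm (W l))
    (φ : EuclideanSpace ℝ (Fin (d 0))) (hφ : ‖φ‖ ≤ 1) :
    ‖fcnet σ d W φ L - fcnet σ d W' φ L‖ ≤
      ∑ l ∈ Finset.range L,
        (∏ i ∈ (Finset.range L).erase l, frobNorm (W i)) * frobNorm (W l - W' l) := by
  have hpruned_le (l : ℕ) : ‖fcnet σ d W' φ l‖ ≤ ∏ i ∈ Finset.range l, frobNorm (W i) :=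
    (norm_fcnet_le hσ hσ0 hφ l).trans
      (Finset.prod_le_prod (fun i _ => frobNorm_nonneg _) fun i _ => hprune i)
  exact Finset.le_sum_prod_erase_mul_of_le_mul_add_mul
    (a := fun l => ‖fcnet σ d W φ l - fcnet σ d W' φ l‖) (e := fun l => frobNorm (W l - W' l))
    (by simp [fcnet]) (fun l => frobNorm_nonneg _) (fun l => frobNorm_nonneg _) hpruned_le
    (norm_fcnet_sub_succ_le hσ hσ0) L

/-- (Proposition 1) For pruned weights `Ŵ` with `‖Ŵ^{(l)}‖_F ≤ ‖W^{(l)}‖_F` for each layer,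
and input `‖φ‖ ≤ 1`, the output distortion of the full `L`-layer network is bounded by
`‖f^{(L)}(φ; W) − f^{(L)}(φ; Ŵ)‖ ≤ Σ_{l=1}^{L} A^{(l)} ‖W^{(l)} − Ŵ^{(l)}‖_F`, where
`A^{(l)} = ∏_{i=1, i≠l}^{L} ‖W^{(i)}‖_F` (here `W^{(j)} = W (j-1)`). -/
theorem fcnet_output_distortion_bound (σ : ℝ → ℝ)
    (hσ : LipschitzWith 1 σ) (hσ0 : σ 0 = 0)
    (d : ℕ → ℕ) (L : ℕ) (hL : 1 ≤ L)
    (W W' : (l : ℕ) → Matrix (Fin (d (l + 1))) (Fin (d l)) ℝ)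
    (hprune : ∀ l, frobNorm (W' l) ≤ frobNorm (W l))
    (φ : EuclideanSpace ℝ (Fin (d 0))) (hφ : ‖φ‖ ≤ 1) :
    ‖fcnet σ d W φ L - fcnet σ d W' φ L‖ ≤
      ∑ l ∈ Finset.range L,
        (∏ i ∈ (Finset.range L).erase l, frobNorm (W i)) * frobNorm (W l - W' l) :=
  fcnet_output_distortion_bound_general σ hσ hσ0 d L W W' hprune φ hφ
end

section
/- (Lemma 4, general D; Φ(D) = Φ(1) + q log D) Let q ≥ 1 be an integer and D > 0. For every probability density p on ℝ^q (p ≥ 0, ∫ p = 1) with z ↦ ‖z‖ p(z) integrable, ∫_{ℝ^q} ‖z‖ p(z) dz ≤ D, and p log p integrable, the differential entropy satisfies −∫_{ℝ^q} p(z) ln p(z) dz ≤ q ln(√π e D / q) + ln(2 Γ(q) / Γ(q/2)). -/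
/-!
Gibbs' inequality against the Laplace-type density `exp (-β‖z‖) / B(β)` gives
`h(p) ≤ log B(β) + β 𝔼‖z‖` for every `β > 0`. The normalizer `B(β)` is computed by scaling
from `∫ exp (-‖z‖) = Γ(q + 1) vol(ball 0 1)`, and the choice `β = q / D` yields the bound.
-/

open MeasureTheory Measure Module Real Metric

section Gibbs

variable {α : Type*} [MeasurableSpace α] {μ : Measure α}

lemma mul_log_add_sub_le_mul_log {x y : ℝ} (hx : 0 ≤ x) (hy : 0 < y) :
    x * log y + (x - y) ≤ x * log x := by
  rcases hx.eq_or_lt with rfl | hx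
  · simpa using hy.le
  have h := mul_le_mul_of_nonneg_left (log_le_sub_one_of_pos (div_pos hy hx)) hx.le
  rw [log_div hy.ne' hx.ne', mul_sub_one, mul_div_cancel₀ _ hx.ne'] at h
  linarith

lemma integral_mul_log_le_integral_mul_log {p g : α → ℝ} (hp0 : ∀ x, 0 ≤ p x)
    (hg0 : ∀ x, 0 < g x) (hp : Integrable p μ) (hg : Integrable g μ)
    (hpg : Integrable (fun x ↦ p x * log (g x)) μ) (hpp : Integrable (fun x ↦ p x * log (p x)) μ)
    (hmass : ∫ x, g x ∂μ ≤ ∫ x, p x ∂μ) :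
    ∫ x, p x * log (g x) ∂μ ≤ ∫ x, p x * log (p x) ∂μ := by
  have hdiff : Integrable (fun x ↦ p x - g x) μ := hp.sub hg
  have h : ∫ x, (p x * log (g x) + (p x - g x)) ∂μ ≤ ∫ x, p x * log (p x) ∂μ :=
    integral_mono (hpg.add hdiff) hpp fun x ↦ mul_log_add_sub_le_mul_log (hp0 x) (hg0 x)
  rw [integral_add hpg hdiff, integral_sub hp hg] at h
  linarith

end Gibbs

section NormedSpace

variable {E : Type*} [NormedAddCommGroup E] [NormedSpace ℝ E] [FiniteDimensional ℝ E]
  [MeasurableSpace E] [BorelSpace E] (μ : Measure E) [IsAddHaarMeasure μ]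

lemma integral_exp_neg_norm_eq :
    ∫ x, exp (-‖x‖) ∂μ = Gamma (finrank ℝ E + 1) * μ.real (ball 0 1) := by
  have hΓ : 0 < Gamma (finrank ℝ E + 1) := Gamma_pos_of_pos (by positivity)
  have h := measure_unitBall_eq_integral_div_gamma μ one_pos
  simp only [rpow_one, div_one] at h
  rw [measureReal_def, h,
    ENNReal.toReal_ofReal (div_nonneg (integral_nonneg fun _ ↦ (exp_pos _).le) hΓ.le),
    mul_div_cancel₀ _ hΓ.ne']

lemma integral_exp_neg_mul_norm_eq {β : ℝ} (hβ : 0 < β) :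
    ∫ x, exp (-(β * ‖x‖)) ∂μ =
      Gamma (finrank ℝ E + 1) * μ.real (ball 0 1) / β ^ finrank ℝ E := by
  have h := integral_comp_smul μ (fun x ↦ exp (-‖x‖)) β
  simp only [norm_smul, norm_of_nonneg hβ.le] at h
  rw [h, integral_exp_neg_norm_eq, abs_of_pos (by positivity), smul_eq_mul]
  field_simp

lemma integral_exp_neg_mul_norm_pos {β : ℝ} (hβ : 0 < β) :
    0 < ∫ x, exp (-(β * ‖x‖)) ∂μ := by
  have hΓ : 0 < Gamma (finrank ℝ E + 1) := Gamma_pos_of_pos (by positivity)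
  have hball : 0 < μ.real (ball 0 1) :=
    ENNReal.toReal_pos (measure_ball_pos μ 0 one_pos).ne' measure_ball_lt_top.ne
  rw [integral_exp_neg_mul_norm_eq μ hβ]
  positivity

lemma integrable_exp_neg_mul_norm {β : ℝ} (hβ : 0 < β) :
    Integrable (fun x ↦ exp (-(β * ‖x‖))) μ :=
  .of_integral_ne_zero (integral_exp_neg_mul_norm_pos μ hβ).ne'

theorem neg_integral_mul_log_le_log_integral_exp_add {β : ℝ} (hβ : 0 < β) {p : E → ℝ}
    (hp0 : ∀ x, 0 ≤ p x) (hp1 : ∫ x, p x ∂μ = 1) (hint : Integrable (fun x ↦ ‖x‖ * p x) μ)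
    (hlog : Integrable (fun x ↦ p x * log (p x)) μ) :
    -∫ x, p x * log (p x) ∂μ ≤ log (∫ x, exp (-(β * ‖x‖)) ∂μ) + β * ∫ x, ‖x‖ * p x ∂μ := by
  set Z := ∫ x, exp (-(β * ‖x‖)) ∂μ
  have hZ : 0 < Z := integral_exp_neg_mul_norm_pos μ hβ
  have hp : Integrable p μ := .of_integral_ne_zero (by simp [hp1])
  have hlog_g : ∀ x, p x * log (exp (-(β * ‖x‖)) / Z) = -β * (‖x‖ * p x) - log Z * p x := by
    intro x
    rw [log_div (exp_pos _).ne' hZ.ne', log_exp]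
    ring
  have hpg : Integrable (fun x ↦ p x * log (exp (-(β * ‖x‖)) / Z)) μ := by
    simp_rw [hlog_g]
    exact (hint.const_mul _).sub (hp.const_mul _)
  have hgibbs := integral_mul_log_le_integral_mul_log hp0 (fun x ↦ div_pos (exp_pos _) hZ) hp
    ((integrable_exp_neg_mul_norm μ hβ).div_const Z) hpg hlog
    (by rw [integral_div, div_self hZ.ne', hp1])
  simp_rw [hlog_g] at hgibbs
  rw [integral_sub (hint.const_mul _) (hp.const_mul _), integral_const_mul, integral_const_mul,
    hp1] at hgibbs
  linarith

end NormedSpace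

lemma InnerProductSpace.integral_exp_neg_mul_norm {E : Type*} [NormedAddCommGroup E]
    [InnerProductSpace ℝ E] [FiniteDimensional ℝ E] [MeasurableSpace E] [BorelSpace E]
    [Nontrivial E] {β : ℝ} (hβ : 0 < β) :
    ∫ x : E, exp (-(β * ‖x‖)) =
      2 * Gamma (finrank ℝ E) / Gamma (finrank ℝ E / 2) * √π ^ finrank ℝ E / β ^ finrank ℝ E := by
  have hd : (0 : ℝ) < finrank ℝ E := Nat.cast_pos.2 finrank_pos
  have hΓ : Gamma (finrank ℝ E / 2) ≠ 0 := (Gamma_pos_of_pos (half_pos hd)).ne'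
  rw [integral_exp_neg_mul_norm_eq volume hβ, measureReal_def, InnerProductSpace.volume_ball,
    ENNReal.ofReal_one, one_pow, one_mul, ENNReal.toReal_ofReal (by positivity),
    Gamma_add_one hd.ne', Gamma_add_one (by positivity)]
  field_simp

lemma log_mul_pow_div_pow_add_eq {a c D : ℝ} (ha : 0 < a) (hc : 0 < c) (hD : 0 < D) {n : ℕ}
    (hn : 0 < n) :
    log (a * c ^ n / (n / D) ^ n) + n / D * D = n * log (c * exp 1 * D / n) + log a := by
  have hn' : (0 : ℝ) < n := Nat.cast_pos.2 hn
  rw [log_div (by positivity) (by positivity), log_mul ha.ne' (by positivity), log_pow, log_pow,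
    log_div hn'.ne' hD.ne', log_div (by positivity) hn'.ne', log_mul (by positivity) hD.ne',
    log_mul hc.ne' (exp_pos 1).ne', log_exp, div_mul_cancel₀ _ hD.ne']
  ring

/-- (Lemma 4, general `D`; `Φ(D) = Φ(1) + q log D`) Let `q ≥ 1` and `D > 0`. Every
probability density `p` on `ℝ^q` with `∫ ‖z‖ p(z) dz ≤ D` (and the stated integrability)
has differential entropy at most `q ln(√π e D / q) + ln(2 Γ(q) / Γ(q/2))`. -/
theorem differential_entropy_sup_bound (q : ℕ) (hq : 1 ≤ q) (D : ℝ) (hD : 0 < D)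
    (p : EuclideanSpace ℝ (Fin q) → ℝ)
    (hp0 : ∀ z, 0 ≤ p z)
    (hp1 : ∫ z, p z = 1)
    (hint : Integrable (fun z : EuclideanSpace ℝ (Fin q) => ‖z‖ * p z))
    (hmean : ∫ z : EuclideanSpace ℝ (Fin q), ‖z‖ * p z ≤ D)
    (hlog : Integrable (fun z : EuclideanSpace ℝ (Fin q) => p z * Real.log (p z))) :
    -∫ z : EuclideanSpace ℝ (Fin q), p z * Real.log (p z) ≤
      q * Real.log (Real.sqrt Real.pi * Real.exp 1 * D / q) +
        Real.log (2 * Real.Gamma q / Real.Gamma ((q : ℝ) / 2)) := by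
  have : Nonempty (Fin q) := ⟨⟨0, hq⟩⟩
  have hq' : (0 : ℝ) < q := Nat.cast_pos.2 hq
  have hβ : 0 < q / D := div_pos hq' hD
  have hΓ : 0 < 2 * Gamma q / Gamma (q / 2) :=
    div_pos (mul_pos two_pos (Gamma_pos_of_pos hq')) (Gamma_pos_of_pos (half_pos hq'))
  calc -∫ z, p z * log (p z)
      ≤ log (∫ z : EuclideanSpace ℝ (Fin q), exp (-(q / D * ‖z‖))) + q / D * ∫ z, ‖z‖ * p z :=
        neg_integral_mul_log_le_log_integral_exp_add volume hβ hp0 hp1 hint hlog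
    _ ≤ log (∫ z : EuclideanSpace ℝ (Fin q), exp (-(q / D * ‖z‖))) + q / D * D := by gcongr
    _ = _ := by
        rw [InnerProductSpace.integral_exp_neg_mul_norm hβ, finrank_euclideanSpace_fin]
        exact log_mul_pow_div_pow_add_eq hΓ (sqrt_pos.2 pi_pos) hD hq
end

section
/- (Achievability of the entropy supremum) Let q ≥ 1 be an integer and D > 0, and define the density Q(z) = e^{−(q/D)‖z‖} / B(q/D) on ℝ^q, where B(β) = 2 Γ(q) π^{q/2}/(Γ(q/2) β^q). Then Q is a probability density (∫ Q = 1), its expected norm is ∫_{ℝ^q} ‖z‖ Q(z) dz = D, and its differential entropy equals the supremum value: −∫_{ℝ^q} Q(z) ln Q(z) dz = q ln(√π e D / q) + ln(2 Γ(q) / Γ(q/2)). -/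
open MeasureTheory Real Set Module Metric

/-! In polar coordinates `∫ f ‖x‖ = n · vol(B₁) · ∫₀^∞ r^(n-1) f r dr`, and
`n · vol(B₁) = 2π^(n/2)/Γ(n/2)` is the area of the unit sphere, so every moment
`∫ ‖x‖^k e^(-β‖x‖)` is a Gamma integral, equal to `2π^(n/2) Γ(n+k) / (Γ(n/2) β^(n+k))`.
For `k = 0` this is `B(β)`, and `k = 1` gives mean norm `n/β`. As
`-log Q_β = β‖x‖ + log B(β)`, the entropy is `β · n/β + log B(β) = n + log B(β)`,
which at `β = n/D` expands to the stated value. -/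

lemma integrableOn_pow_mul_exp_neg_mul_Ioi (m : ℕ) {β : ℝ} (hβ : 0 < β) :
    IntegrableOn (fun y : ℝ => y ^ m * exp (-β * y)) (Ioi 0) := by
  simpa only [rpow_natCast, rpow_one] using
    integrableOn_rpow_mul_exp_neg_mul_rpow (s := m) (p := 1)
      (neg_one_lt_zero.trans_le m.cast_nonneg) one_pos hβ

lemma integral_pow_mul_exp_neg_mul_Ioi (m : ℕ) {β : ℝ} (hβ : 0 < β) :
    ∫ y in Ioi (0 : ℝ), y ^ m * exp (-β * y) = Gamma (m + 1) / β ^ (m + 1) := by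
  have h := integral_rpow_mul_exp_neg_mul_Ioi (a := m + 1) (by positivity) hβ
  rw [add_sub_cancel_right, ← Nat.cast_add_one, rpow_natCast, one_div_pow] at h
  simpa only [rpow_natCast, neg_mul, Nat.cast_add_one, one_div_mul_eq_div] using h

section Radial

variable {E : Type*} [NormedAddCommGroup E] [NormedSpace ℝ E] [Nontrivial E]
  [FiniteDimensional ℝ E] [MeasurableSpace E] [BorelSpace E] (μ : Measure E) [μ.IsAddHaarMeasure]

theorem integrable_norm_pow_mul_exp_neg_mul_norm (k : ℕ) {β : ℝ} (hβ : 0 < β) :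
    Integrable (fun x => ‖x‖ ^ k * exp (-β * ‖x‖)) μ := by
  refine (integrable_fun_norm_addHaar μ (f := fun y => y ^ k * exp (-β * y))).2 ?_
  simpa only [smul_eq_mul, pow_add, mul_assoc] using
    integrableOn_pow_mul_exp_neg_mul_Ioi (finrank ℝ E - 1 + k) hβ

theorem integral_norm_pow_mul_exp_neg_mul_norm (k : ℕ) {β : ℝ} (hβ : 0 < β) :
    ∫ x, ‖x‖ ^ k * exp (-β * ‖x‖) ∂μ =
      finrank ℝ E * μ.real (ball 0 1) * (Gamma (finrank ℝ E + k) / β ^ (finrank ℝ E + k)) := by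
  have hdeg : finrank ℝ E - 1 + k + 1 = finrank ℝ E + k := by
    have : 0 < finrank ℝ E := finrank_pos
    omega
  rw [integral_fun_norm_addHaar μ (fun y => y ^ k * exp (-β * y))]
  simp only [smul_eq_mul, ← mul_assoc, ← pow_add]
  rw [integral_pow_mul_exp_neg_mul_Ioi _ hβ, ← Nat.cast_add_one, hdeg, nsmul_eq_mul, Nat.cast_add,
    mul_assoc]

end Radial

noncomputable def expNormConst (n : ℕ) (β : ℝ) : ℝ :=
  2 * Gamma n * π ^ ((n : ℝ) / 2) / (Gamma ((n : ℝ) / 2) * β ^ n)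

lemma expNormConst_pos {n : ℕ} (hn : 0 < n) {β : ℝ} (hβ : 0 < β) : 0 < expNormConst n β := by
  have hn' : (0 : ℝ) < n := by exact_mod_cast hn
  have := Gamma_pos_of_pos hn'
  have := Gamma_pos_of_pos (half_pos hn')
  unfold expNormConst
  positivity

lemma log_expNormConst {n : ℕ} (hn : 0 < n) {β : ℝ} (hβ : 0 < β) :
    log (expNormConst n β) =
      log (2 * Gamma n / Gamma ((n : ℝ) / 2)) + n / 2 * log π - n * log β := by
  have hn' : (0 : ℝ) < n := by exact_mod_cast hn
  have hΓ := Gamma_pos_of_pos hn'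
  have hΓhalf := Gamma_pos_of_pos (half_pos hn')
  rw [expNormConst, log_div (by positivity) (by positivity),
    log_mul (by positivity) (by positivity), log_mul (by positivity) (by positivity),
    log_mul hΓhalf.ne' (by positivity), log_rpow pi_pos, log_pow, log_div (by positivity) hΓhalf.ne', log_mul two_ne_zero hΓ.ne']
  ring

section InnerProductSpace

variable {E : Type*} [NormedAddCommGroup E] [InnerProductSpace ℝ E] [Nontrivial E]
  [FiniteDimensional ℝ E] [MeasurableSpace E] [BorelSpace E]

lemma finrank_mul_volume_real_ball_zero_one :
    finrank ℝ E * volume.real (ball (0 : E) 1) =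
      2 * π ^ ((finrank ℝ E : ℝ) / 2) / Gamma ((finrank ℝ E : ℝ) / 2) := by
  have hn : (0 : ℝ) < finrank ℝ E := by exact_mod_cast finrank_pos
  have := Gamma_pos_of_pos (half_pos hn)
  rw [measureReal_def, InnerProductSpace.volume_ball, ENNReal.ofReal_one, one_pow, one_mul,
    ENNReal.toReal_ofReal (by positivity), Gamma_add_one (by positivity), sqrt_eq_rpow,
    ← rpow_natCast, ← rpow_mul pi_pos.le]
  field_simp

noncomputable def expNormDensity (β : ℝ) (x : E) : ℝ :=
  exp (-β * ‖x‖) / expNormConst (finrank ℝ E) β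

lemma integral_exp_neg_mul_norm {β : ℝ} (hβ : 0 < β) :
    ∫ x : E, exp (-β * ‖x‖) = expNormConst (finrank ℝ E) β := by
  have h := integral_norm_pow_mul_exp_neg_mul_norm (volume : Measure E) 0 hβ
  simp only [pow_zero, one_mul, Nat.cast_zero, add_zero] at h
  rw [h, finrank_mul_volume_real_ball_zero_one, expNormConst]
  ring

lemma integral_norm_mul_exp_neg_mul_norm {β : ℝ} (hβ : 0 < β) :
    ∫ x : E, ‖x‖ * exp (-β * ‖x‖) = finrank ℝ E / β * expNormConst (finrank ℝ E) β := by
  have h := integral_norm_pow_mul_exp_neg_mul_norm (volume : Measure E) 1 hβ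
  simp only [pow_one, Nat.cast_one] at h
  have hn : (0 : ℝ) < finrank ℝ E := by exact_mod_cast finrank_pos
  rw [h, finrank_mul_volume_real_ball_zero_one, expNormConst, Gamma_add_one hn.ne', pow_succ]
  field_simp

theorem integral_expNormDensity {β : ℝ} (hβ : 0 < β) : ∫ x : E, expNormDensity β x = 1 := by
  simp only [expNormDensity]
  rw [integral_div, integral_exp_neg_mul_norm hβ, div_self (expNormConst_pos finrank_pos hβ).ne']

theorem integral_norm_mul_expNormDensity {β : ℝ} (hβ : 0 < β) :
    ∫ x : E, ‖x‖ * expNormDensity β x = finrank ℝ E / β := by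
  simp only [expNormDensity, mul_div_assoc']
  rw [integral_div, integral_norm_mul_exp_neg_mul_norm hβ,
    mul_div_cancel_right₀ _ (expNormConst_pos finrank_pos hβ).ne']

theorem neg_integral_expNormDensity_mul_log {β : ℝ} (hβ : 0 < β) :
    -∫ x : E, expNormDensity β x * log (expNormDensity β x) =
      finrank ℝ E + log (expNormConst (finrank ℝ E) β) := by
  set B := expNormConst (finrank ℝ E) β
  have hB : 0 < B := expNormConst_pos finrank_pos hβ
  have hlog (x : E) : -(expNormDensity β x * log (expNormDensity β x)) =
      β * (‖x‖ * expNormDensity β x) + log B * expNormDensity β x := by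
    rw [expNormDensity, log_div (exp_ne_zero _) hB.ne', log_exp]
    ring
  have hint : Integrable (expNormDensity β) (volume : Measure E) := by
    have h := (integrable_norm_pow_mul_exp_neg_mul_norm (volume : Measure E) 0 hβ).div_const B
    simp only [pow_zero, one_mul] at h
    exact h
  have hint_norm : Integrable (fun x => ‖x‖ * expNormDensity β x) (volume : Measure E) := by
    have h := (integrable_norm_pow_mul_exp_neg_mul_norm (volume : Measure E) 1 hβ).div_const B
    simp only [pow_one, mul_div_assoc] at h
    exact h
  rw [← integral_neg]
  simp_rw [hlog]
  rw [integral_add (hint_norm.const_mul β) (hint.const_mul _), integral_const_mul,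
    integral_const_mul, integral_norm_mul_expNormDensity hβ, integral_expNormDensity hβ,
    mul_div_cancel₀ _ hβ.ne', mul_one]

end InnerProductSpace

/-- (Achievability of the entropy supremum) For `q ≥ 1` and `D > 0`, the density
`Q(z) = e^{−(q/D)‖z‖} / B(q/D)` on `ℝ^q`, where `B(β) = 2 Γ(q) π^{q/2}/(Γ(q/2) β^q)`,
integrates to `1`, has expected norm `∫ ‖z‖ Q(z) dz = D`, and its differential entropy
equals the supremum value `q ln(√π e D / q) + ln(2 Γ(q) / Γ(q/2))`. -/
theorem entropy_sup_achieved (q : ℕ) (hq : 1 ≤ q) (D : ℝ) (hD : 0 < D) :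
    (∫ z : EuclideanSpace ℝ (Fin q),
        Real.exp (-((q : ℝ) / D) * ‖z‖) /
          (2 * Real.Gamma q * Real.pi ^ ((q : ℝ) / 2) /
            (Real.Gamma ((q : ℝ) / 2) * ((q : ℝ) / D) ^ q)) = 1) ∧
    (∫ z : EuclideanSpace ℝ (Fin q),
        ‖z‖ * (Real.exp (-((q : ℝ) / D) * ‖z‖) /
          (2 * Real.Gamma q * Real.pi ^ ((q : ℝ) / 2) /
            (Real.Gamma ((q : ℝ) / 2) * ((q : ℝ) / D) ^ q))) = D) ∧
    (-∫ z : EuclideanSpace ℝ (Fin q),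
        (Real.exp (-((q : ℝ) / D) * ‖z‖) /
          (2 * Real.Gamma q * Real.pi ^ ((q : ℝ) / 2) /
            (Real.Gamma ((q : ℝ) / 2) * ((q : ℝ) / D) ^ q))) *
        Real.log (Real.exp (-((q : ℝ) / D) * ‖z‖) /
          (2 * Real.Gamma q * Real.pi ^ ((q : ℝ) / 2) /
            (Real.Gamma ((q : ℝ) / 2) * ((q : ℝ) / D) ^ q))) =
      q * Real.log (Real.sqrt Real.pi * Real.exp 1 * D / q) +
        Real.log (2 * Real.Gamma q / Real.Gamma ((q : ℝ) / 2))) := by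
  have : Nonempty (Fin q) := ⟨⟨0, hq⟩⟩
  have hq₀ : (0 : ℝ) < q := by exact_mod_cast hq
  have hβ : 0 < (q : ℝ) / D := div_pos hq₀ hD
  have h₀ := integral_expNormDensity (E := EuclideanSpace ℝ (Fin q)) hβ
  have h₁ := integral_norm_mul_expNormDensity (E := EuclideanSpace ℝ (Fin q)) hβ
  have h₂ := neg_integral_expNormDensity_mul_log (E := EuclideanSpace ℝ (Fin q)) hβ
  simp only [expNormDensity, finrank_euclideanSpace_fin] at h₀ h₁ h₂
  refine ⟨h₀, h₁.trans (by field_simp), h₂.trans ?_⟩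
  rw [log_expNormConst hq hβ, log_div hq₀.ne' hD.ne', log_div (by positivity) hq₀.ne',
    log_mul (by positivity) hD.ne', log_mul (by positivity) (exp_ne_zero 1), log_sqrt pi_pos.le,
    log_exp]
  ring
end
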